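/- There exists a one-way deterministic one-counter automaton (1D1CA) over the alphabet {a,b} that recognizes the complement of EQ* within {a,b}*, i.e., it accepts exactly those strings in {a,b}* that do not belong to EQ*. -/

import Mathlib

/-- Input symbols extended with the left (`cent`) and right (`dollar`) end-markers. -/
inductive TSym (α : Type) : Type
  | cent : TSym α
  | letter : α → TSym α
  | dollar : TSym α

/-- The tape content `¢ w $` for an input word `w`. -/
def tagged {α : Type} (w : List α) : List (TSym α) :=
  TSym.cent :: (w.map TSym.letter ++ [TSym.dollar])

/-- A one-way deterministic one-counter automaton. -/
structure OneD1CA (α : Type) where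
  Q : Type
  [fintypeQ : Fintype Q]
  [decQ : DecidableEq Q]
  q0 : Q
  acc : Set Q
  m : ℕ
  δ : Q → TSym α → Bool → Q × ℤ
  bound : ∀ q σ z, |(δ q σ z).2| ≤ (m : ℤ)

attribute [instance] OneD1CA.fintypeQ OneD1CA.decQ

namespace OneD1CA

variable {α : Type} (M : OneD1CA α)

/-- One computation step on a configuration (state, counter value). -/
def step (p : M.Q × ℤ) (σ : TSym α) : M.Q × ℤ :=
  ((M.δ p.1 σ (decide (p.2 = 0))).1, p.2 + (M.δ p.1 σ (decide (p.2 = 0))).2)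

/-- Configuration reached from the initial configuration after reading a list of tape symbols. -/
def confAfter (l : List (TSym α)) : M.Q × ℤ :=
  l.foldl M.step (M.q0, 0)

/-- The automaton accepts `w` iff the state after reading `¢ w $` is accepting. -/
def accepts (w : List α) : Prop :=
  (M.confAfter (tagged w)).1 ∈ M.acc

/-- The automaton recognizes the language `L` if it accepts exactly the members of `L`. -/
def recognizes (L : Set (List α)) : Prop :=
  ∀ w : List α, M.accepts w ↔ w ∈ L

end OneD1CA

/-- The alphabet `{a, b}`. -/
inductive Γ2 : Type
  | a : Γ2
  | b : Γ2
deriving DecidableEq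

/-- The language `EQ = { a^n b^n : n > 0 }`. -/
def EQ : Language Γ2 :=
  {w | ∃ n : ℕ, 0 < n ∧ w = List.replicate n Γ2.a ++ List.replicate n Γ2.b}

/-- The Kleene closure `EQ*`. -/
def EQstar : Language Γ2 := KStar.kstar EQ

/-!
The automaton counts the `a`s of the current block up and its `b`s down, so that the
configuration `(inB, 0)` marks a block boundary; any letter out of place (including a premature
`$`) sends it to an absorbing state `dead`, the only accepting state. Reading a block `aⁿbⁿ`
from `(inB, 0)` returns there, so every word of `EQ*` ends in `(inB, 0)`. Conversely, every live
configuration reached on `w` records a factorisation of `w` into a word of `EQ*` followed by a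
partial block `aⁿbᵐ` with counter `n - m` (the invariant `Consistent`), and at `(inB, 0)` that
partial block is empty or whole.
-/

theorem OneD1CA.confAfter_tagged {α : Type} (M : OneD1CA α) (w : List α) :
    M.confAfter (tagged w) =
      M.step ((w.map TSym.letter).foldl M.step (M.step (M.q0, 0) TSym.cent)) TSym.dollar := by
  simp [OneD1CA.confAfter, tagged]

open scoped Computability in
theorem Language.append_mem_kstar {α : Type} {l : Language α} {u v : List α}
    (hu : u ∈ l∗) (hv : v ∈ l) : u ++ v ∈ l∗ := by
  rw [← one_add_kstar_mul_self_eq_kstar]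
  exact Or.inr (append_mem_mul hu hv)

theorem append_replicate_mem_EQstar {u : List Γ2} (hu : u ∈ EQstar) (n : ℕ) :
    u ++ (List.replicate n Γ2.a ++ List.replicate n Γ2.b) ∈ EQstar := by
  rcases n.eq_zero_or_pos with rfl | hn
  · simpa using hu
  · exact Language.append_mem_kstar hu ⟨n, hn, rfl⟩

namespace EQstarCompl

inductive State : Type
  | inA | inB | dead
deriving DecidableEq

instance : Fintype State where
  elems := {.inA, .inB, .dead}
  complete q := by cases q <;> simp

open State

/-- In `inA` the counter is the number of `a`s read in the current block, in `inB` the number of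
`b`s still owed to it. -/
def trans : State → TSym Γ2 → Bool → State × ℤ
  | inB, .cent, true => (inB, 0)
  | inB, .letter .a, true => (inA, 1)
  | inB, .letter .b, false => (inB, -1)
  | inB, .dollar, true => (inB, 0)
  | inA, .letter .a, _ => (inA, 1)
  | inA, .letter .b, _ => (inB, -1)
  | _, _, _ => (dead, 0)

abbrev automaton : OneD1CA Γ2 where
  Q := State
  q0 := inB
  acc := {dead}
  m := 1
  δ := trans
  bound q σ z := by cases q <;> rcases σ with _ | (_ | _) | _ <;> cases z <;> decide

-- The ascriptions `(_ : State × ℤ)` keep configurations typed by `State` rather than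
-- `automaton.Q`, so that the step lemmas below match the terms produced by `run`.
def run (w : List Γ2) : State × ℤ :=
  (w.map TSym.letter).foldl automaton.step ((inB, 0) : State × ℤ)

theorem step_inA_a (k : ℤ) :
    automaton.step ((inA, k) : State × ℤ) (.letter .a) = (inA, k + 1) := rfl

theorem step_inA_b (k : ℤ) :
    automaton.step ((inA, k) : State × ℤ) (.letter .b) = (inB, k - 1) := rfl

theorem step_inB_zero_a : automaton.step ((inB, 0) : State × ℤ) (.letter .a) = (inA, 1) := rfl

theorem step_inB_zero_b : automaton.step ((inB, 0) : State × ℤ) (.letter .b) = (dead, 0) := rfl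

theorem step_inB_a {k : ℤ} (hk : k ≠ 0) :
    automaton.step ((inB, k) : State × ℤ) (.letter .a) = (dead, k) := by
  simp [OneD1CA.step, trans, hk]

theorem step_inB_b {k : ℤ} (hk : k ≠ 0) :
    automaton.step ((inB, k) : State × ℤ) (.letter .b) = (inB, k - 1) := by
  simp [OneD1CA.step, trans, hk, sub_eq_add_neg]

theorem step_dead (k : ℤ) (σ : TSym Γ2) :
    automaton.step ((dead, k) : State × ℤ) σ = (dead, k) := by
  cases σ <;> simp [OneD1CA.step, trans]

theorem step_dollar_eq_dead_iff (c : State × ℤ) :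
    (automaton.step c .dollar).1 = dead ↔ c ≠ (inB, 0) := by
  obtain ⟨q, k⟩ := c
  by_cases hk : k = 0 <;> cases q <;> simp [OneD1CA.step, trans, hk]

theorem foldl_replicate_a (n : ℕ) (k : ℤ) :
    (List.replicate n (TSym.letter Γ2.a)).foldl automaton.step ((inA, k) : State × ℤ) =
      (inA, k + n) := by
  induction n generalizing k with
  | zero => simp
  | succ n ih =>
    rw [List.replicate_succ, List.foldl_cons, step_inA_a, ih]
    congr 1
    omega

theorem foldl_replicate_b (m : ℕ) {k : ℤ} (hm : m ≤ k) :
    (List.replicate m (TSym.letter Γ2.b)).foldl automaton.step ((inB, k) : State × ℤ) =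
      (inB, k - m) := by
  induction m generalizing k with
  | zero => simp
  | succ m ih =>
    rw [List.replicate_succ, List.foldl_cons, step_inB_b (by omega), ih (by omega)]
    congr 1
    omega

theorem foldl_block {n : ℕ} (hn : 0 < n) :
    ((List.replicate n Γ2.a ++ List.replicate n Γ2.b).map TSym.letter).foldl automaton.step
      ((inB, 0) : State × ℤ) = (inB, 0) := by
  obtain ⟨n, rfl⟩ : ∃ m, n = m + 1 := ⟨n - 1, by omega⟩
  rw [List.map_append, List.map_replicate, List.map_replicate, List.foldl_append,
    List.replicate_succ, List.replicate_succ, List.foldl_cons, List.foldl_cons, step_inB_zero_a,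
    foldl_replicate_a, step_inA_b, foldl_replicate_b n (by omega)]
  congr 1
  omega

theorem run_append (u v : List Γ2) :
    run (u ++ v) = (v.map TSym.letter).foldl automaton.step (run u) := by
  simp [run]

theorem run_eq_of_mem_EQstar {w : List Γ2} (hw : w ∈ EQstar) : run w = (inB, 0) := by
  obtain ⟨L, rfl, hL⟩ := Language.mem_kstar.1 hw
  clear hw
  induction L using List.reverseRecOn with
  | nil => rfl
  | append_singleton L B ih =>
    obtain ⟨n, hn, rfl⟩ := hL B (by simp)
    rw [List.flatten_append, run_append, ih fun y hy => hL y (by simp [hy])]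
    simpa using foldl_block hn

def Consistent : State × ℤ → List Γ2 → Prop
  | (inA, k), w => ∃ u ∈ EQstar, ∃ n : ℕ, 0 < n ∧ k = n ∧
      w = u ++ List.replicate n Γ2.a
  | (inB, k), w => ∃ u ∈ EQstar, ∃ n m : ℕ, m ≤ n ∧ k = n - m ∧
      w = u ++ List.replicate n Γ2.a ++ List.replicate m Γ2.b
  | (dead, _), _ => True

theorem consistent_step {c : State × ℤ} {w : List Γ2} (h : Consistent c w) (x : Γ2) :
    Consistent (automaton.step c (.letter x)) (w ++ [x]) := by
  obtain ⟨q, k⟩ := c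
  cases q with
  | dead =>
    rw [step_dead]
    trivial
  | inA =>
    obtain ⟨u, hu, n, hn, rfl, rfl⟩ := h
    cases x
    · rw [step_inA_a]
      exact ⟨u, hu, n + 1, by omega, by simp, by simp [List.replicate_succ']⟩
    · rw [step_inA_b]
      exact ⟨u, hu, n, 1, hn, by simp, by simp⟩
  | inB =>
    obtain ⟨u, hu, n, m, hmn, rfl, rfl⟩ := h
    by_cases hk : (n : ℤ) - m = 0
    · obtain rfl : n = m := by omega
      cases x
      · rw [hk, step_inB_zero_a]
        exact ⟨u ++ (List.replicate n Γ2.a ++ List.replicate n Γ2.b),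
          append_replicate_mem_EQstar hu n, 1, one_pos, by simp, by simp⟩
      · rw [hk, step_inB_zero_b]
        trivial
    · cases x
      · rw [step_inB_a hk]
        trivial
      · rw [step_inB_b hk]
        exact ⟨u, hu, n, m + 1, by omega, by omega, by simp [List.replicate_succ']⟩

theorem consistent_run (w : List Γ2) : Consistent (run w) w := by
  induction w using List.reverseRecOn with
  | nil => exact ⟨[], Language.nil_mem_kstar _, 0, 0, le_rfl, rfl, rfl⟩
  | append_singleton w x ih => simpa [run_append] using consistent_step ih x

theorem mem_EQstar_of_consistent {w : List Γ2} (h : Consistent (inB, 0) w) : w ∈ EQstar := by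
  obtain ⟨u, hu, n, m, -, hnm, rfl⟩ := h
  obtain rfl : n = m := by omega
  simpa using append_replicate_mem_EQstar hu n

theorem run_eq_iff_mem_EQstar (w : List Γ2) : run w = (inB, 0) ↔ w ∈ EQstar :=
  ⟨fun h => mem_EQstar_of_consistent (h ▸ consistent_run w), run_eq_of_mem_EQstar⟩

theorem accepts_iff (w : List Γ2) : automaton.accepts w ↔ run w ≠ (inB, 0) := by
  rw [OneD1CA.accepts, OneD1CA.confAfter_tagged]
  -- reading `¢` leaves the initial configuration `(inB, 0)` unchanged
  exact step_dollar_eq_dead_iff (run w)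

end EQstarCompl

/-- some 1D1CA recognizes the complement of `EQ*` within `{a,b}*`. -/
theorem stmt19 : ∃ M : OneD1CA Γ2, M.recognizes {w : List Γ2 | w ∉ EQstar} :=
  ⟨EQstarCompl.automaton, fun w =>
    (EQstarCompl.accepts_iff w).trans (EQstarCompl.run_eq_iff_mem_EQstar w).not⟩
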